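/- arXiv:1408.3507 — 6 statements merged into one kernel-verified Lean document; each statement's English description precedes it below -/
import Mathlib

section
/- Let V1,...,Vp be real inner product spaces and V their tensor product with the induced inner product. A nonzero rank-one tensor x = x1 ⊗ ... ⊗ xp is a critical point of the squared-distance function d_v(x) = ‖v - x‖² on the manifold of nonzero rank-one tensors if and only if for every i = 1,...,p, the contraction of v with x1 ⊗ ... ⊗ x̂i ⊗ ... ⊗ xp (omitting the i-th factor, using the inner products) equals (∏_{j ≠ i} ⟨xj, xj⟩) · xi. -/
/-!
Pairing `v - x₁ ⊗ ⋯ ⊗ x_p` with the tangent vector `x₁ ⊗ ⋯ ⊗ y ⊗ ⋯ ⊗ x_p` is linear in `y`: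
the `v`-part is `⟨⟨v | x₁ ⊗ ⋯ x̂ᵢ ⋯ ⊗ x_p⟩, y⟩`, and since inner products of rank-one tensors
factor, the `x`-part is `(∏_{j ≠ i} ⟨xⱼ, xⱼ⟩) ⟨xᵢ, y⟩`. This vanishes for all `y` exactly when
the contraction equals `(∏_{j ≠ i} ⟨xⱼ, xⱼ⟩) xᵢ`.
-/

open BigOperators RealInnerProductSpace Finset

noncomputable section

/-- The rank-one tensor `x₁ ⊗ ⋯ ⊗ x_p`, viewed as a multi-indexed array. -/
def rk1 {p : ℕ} (n : Fin p → ℕ) (x : ∀ i, EuclideanSpace ℝ (Fin (n i))) :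
    EuclideanSpace ℝ (∀ i, Fin (n i)) :=
  WithLp.toLp 2 (fun α => ∏ i, x i (α i))

/-- The contraction `⟨v | x₁ ⊗ ⋯ x̂ᵢ ⋯ ⊗ x_p⟩ ∈ Vᵢ`. -/
def contr {p : ℕ} (n : Fin p → ℕ) (v : EuclideanSpace ℝ (∀ i, Fin (n i)))
    (x : ∀ i, EuclideanSpace ℝ (Fin (n i))) (i : Fin p) :
    EuclideanSpace ℝ (Fin (n i)) :=
  WithLp.toLp 2 (fun a => ∑ α : ∀ j, Fin (n j),
    if α i = a then v α * ∏ j ∈ univ.erase i, x j (α j) else 0)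

theorem prod_update_eq_mul_prod_erase {ι M : Type*} [Fintype ι] [DecidableEq ι]
    [CommMonoid M] {β : ι → Type*} (f : ∀ j, β j → M) (x : ∀ j, β j) (i : ι) (y : β i) :
    ∏ j, f j (Function.update x i y j) = f i y * ∏ j ∈ univ.erase i, f j (x j) := by
  simp only [Function.apply_update f, prod_update_of_mem (mem_univ i),
    sdiff_singleton_eq_erase]

section

variable {p : ℕ} (n : Fin p → ℕ)

theorem inner_rk1_update_eq_inner_contr (v : EuclideanSpace ℝ (∀ i, Fin (n i)))
    (x : ∀ i, EuclideanSpace ℝ (Fin (n i))) (i : Fin p) (y : EuclideanSpace ℝ (Fin (n i))) :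
    ⟪v, rk1 n (Function.update x i y)⟫ = ⟪contr n v x i, y⟫ := by
  simp only [PiLp.inner_apply, RCLike.inner_apply', conj_trivial, rk1, contr, sum_mul,
    ite_mul, zero_mul]
  rw [sum_comm]
  refine sum_congr rfl fun α _ => ?_
  rw [sum_ite_eq, if_pos (mem_univ _),
    prod_update_eq_mul_prod_erase (fun j (z : EuclideanSpace ℝ (Fin (n j))) => z (α j))]
  ring

theorem inner_rk1_rk1 (x z : ∀ i, EuclideanSpace ℝ (Fin (n i))) :
    ⟪rk1 n x, rk1 n z⟫ = ∏ i, ⟪x i, z i⟫ := by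
  simp only [PiLp.inner_apply, RCLike.inner_apply, conj_trivial, rk1]
  rw [Fintype.prod_sum]
  exact sum_congr rfl fun α _ => prod_mul_distrib.symm

theorem inner_sub_rk1_rk1_update (v : EuclideanSpace ℝ (∀ i, Fin (n i)))
    (x : ∀ i, EuclideanSpace ℝ (Fin (n i))) (i : Fin p) (y : EuclideanSpace ℝ (Fin (n i))) :
    ⟪v - rk1 n x, rk1 n (Function.update x i y)⟫
      = ⟪contr n v x i, y⟫ - ⟪(∏ j ∈ univ.erase i, ⟪x j, x j⟫) • x i, y⟫ := by
  rw [inner_sub_left, inner_rk1_update_eq_inner_contr, inner_rk1_rk1,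
    prod_update_eq_mul_prod_erase (fun j (z : EuclideanSpace ℝ (Fin (n j))) => ⟪x j, z⟫),
    real_inner_smul_left, real_inner_comm, mul_comm]

end

theorem critical_rank_one_iff_general {p : ℕ} (n : Fin p → ℕ)
    (v : EuclideanSpace ℝ (∀ i, Fin (n i)))
    (x : ∀ i, EuclideanSpace ℝ (Fin (n i))) :
    (∀ (i : Fin p) (y : EuclideanSpace ℝ (Fin (n i))),
        ⟪v - rk1 n x, rk1 n (Function.update x i y)⟫ = 0)
      ↔ (∀ i, contr n v x i = (∏ j ∈ univ.erase i, ⟪x j, x j⟫) • x i) := by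
  refine forall_congr' fun i => ?_
  simp only [inner_sub_rk1_rk1_update, sub_eq_zero, ← ext_iff_inner_right ℝ]

/-- A nonzero rank-one tensor is a critical point of `d_v` (i.e. `v - x` is orthogonal
to the tangent space `∑ᵢ x₁ ⊗ ⋯ ⊗ Vᵢ ⊗ ⋯ ⊗ x_p`) iff each contraction of `v` equals
`(∏_{j ≠ i} ⟨xⱼ, xⱼ⟩) • xᵢ`. -/
theorem critical_rank_one_iff {p : ℕ} (n : Fin p → ℕ)
    (v : EuclideanSpace ℝ (∀ i, Fin (n i)))
    (x : ∀ i, EuclideanSpace ℝ (Fin (n i))) (hx : ∀ i, x i ≠ 0) :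
    (∀ (i : Fin p) (y : EuclideanSpace ℝ (Fin (n i))),
        ⟪v - rk1 n x, rk1 n (Function.update x i y)⟫ = 0)
      ↔ (∀ i, contr n v x i = (∏ j ∈ univ.erase i, ⟪x j, x j⟫) • x i) :=
  critical_rank_one_iff_general n v x
end
end

section
/- For a 2×2 real matrix [[w0, w12],[w12, w0]] with w0 and w12 independent standard normal random variables, the expected absolute value of the determinant, E|w0² - w12²|, equals 4/π. -/
/-!
The substitution `(w₁, w₂) = (u + v, u - v)`, of Jacobian `2`, turns `w₁² - w₂²` into `4uv` and
the Gaussian weight `e^{-(w₁² + w₂²)/2}` into `e^{-u²} e^{-v²}`. The integral therefore factors as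
`(4/π) (∫ |u| e^{-u²} du)²`, and `∫ |u| e^{-u²} du = 1`.
-/

open MeasureTheory Real Set

theorem integral_Ioi_mul_exp_neg_mul_sq {b : ℝ} (hb : 0 < b) :
    ∫ x in Ioi 0, x * exp (-b * x ^ 2) = (2 * b)⁻¹ := by
  have h := integral_mul_cexp_neg_mul_sq (b := (b : ℂ)) (by simpa using hb)
  apply Complex.ofReal_injective
  rw [← integral_complex_ofReal]
  push_cast
  simpa [← Complex.ofReal_exp] using h

theorem integral_abs_mul_exp_neg_mul_sq {b : ℝ} (hb : 0 < b) :
    ∫ x, |x| * exp (-b * x ^ 2) = b⁻¹ := by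
  have h := integral_comp_abs (f := fun x => x * exp (-b * x ^ 2))
  simp only [sq_abs] at h
  rw [h, integral_Ioi_mul_exp_neg_mul_sq hb]
  field_simp

theorem integral_comp_linearMap {E F : Type*} [NormedAddCommGroup E] [NormedSpace ℝ E]
    [MeasurableSpace E] [BorelSpace E] [FiniteDimensional ℝ E] (μ : Measure E)
    [μ.IsAddHaarMeasure] [NormedAddCommGroup F] [NormedSpace ℝ F] {f : E →ₗ[ℝ] E}
    (hf : LinearMap.det f ≠ 0) (g : E → F) :
    ∫ x, g (f x) ∂μ = |LinearMap.det f|⁻¹ • ∫ x, g x ∂μ := by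
  have hembed : MeasurableEmbedding f :=
    (f.equivOfDetNeZero hf).toContinuousLinearEquiv.toHomeomorph.measurableEmbedding
  rw [← hembed.integral_map, Measure.map_linearMap_addHaar_eq_smul_addHaar μ hf,
    integral_smul_measure, abs_inv, ENNReal.toReal_ofReal (by positivity)]

noncomputable def sumDiff : ℝ × ℝ →ₗ[ℝ] ℝ × ℝ :=
  Matrix.toLin (Module.Basis.finTwoProd ℝ) (Module.Basis.finTwoProd ℝ) !![1, 1; 1, -1]

theorem sumDiff_apply (w : ℝ × ℝ) : sumDiff w = (w.1 + w.2, w.1 - w.2) := by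
  simp [sumDiff, Matrix.toLin_finTwoProd_apply, sub_eq_add_neg]

theorem det_sumDiff : LinearMap.det sumDiff = -2 := by
  rw [sumDiff, LinearMap.det_toLin, Matrix.det_fin_two_of]
  norm_num

/-- For independent standard normal `w₀, w₁₂`, the expected absolute determinant of
`[[w₀, w₁₂], [w₁₂, w₀]]`, i.e. `E|w₀² - w₁₂²|`, equals `4/π`. -/
theorem expected_abs_det_two_by_two :
    (∫ w : ℝ × ℝ, |w.1 ^ 2 - w.2 ^ 2| *
      ((1 / (2 * π)) * Real.exp (-(w.1 ^ 2 + w.2 ^ 2) / 2))) = 4 / π := by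
  have hfactor (u v : ℝ) :
      |(u + v) ^ 2 - (u - v) ^ 2| * ((1 / (2 * π)) * exp (-((u + v) ^ 2 + (u - v) ^ 2) / 2))
        = 2 / π * ((|u| * exp (-1 * u ^ 2)) * (|v| * exp (-1 * v ^ 2))) := by
    rw [show (u + v) ^ 2 - (u - v) ^ 2 = 4 * (u * v) by ring,
      show -((u + v) ^ 2 + (u - v) ^ 2) / 2 = -1 * u ^ 2 + -1 * v ^ 2 by ring,
      exp_add, abs_mul, abs_mul, abs_of_pos four_pos]
    field_simp
    ring
  have hchange := integral_comp_linearMap volume (f := sumDiff) (by norm_num [det_sumDiff])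
    fun w : ℝ × ℝ => |w.1 ^ 2 - w.2 ^ 2| * ((1 / (2 * π)) * exp (-(w.1 ^ 2 + w.2 ^ 2) / 2))
  have hprod : ∫ w : ℝ × ℝ, 2 / π * ((|w.1| * exp (-1 * w.1 ^ 2)) * (|w.2| * exp (-1 * w.2 ^ 2)))
      = 2 / π := by
    rw [integral_const_mul, Measure.volume_eq_prod,
      integral_prod_mul (fun u : ℝ => |u| * exp (-1 * u ^ 2)) fun v => |v| * exp (-1 * v ^ 2),
      integral_abs_mul_exp_neg_mul_sq one_pos]
    norm_num
  simp only [sumDiff_apply, hfactor, hprod, det_sumDiff, abs_neg, abs_two, smul_eq_mul] at hchange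
  linear_combination -2 * hchange
end

section
/- Let R_u be the rotation sending unit vector e to a positive multiple of e+u and fixing span{e,u}^⊥. For v orthogonal to both e and u, the directional derivative satisfies R_u^{-1} (∂R_u/∂v) = (1/√(1+‖u‖²))(v eᵀ - e vᵀ) + ((1 - √(1+‖u‖²))/(‖u‖²√(1+‖u‖²)))(v uᵀ - u vᵀ); in particular this is a skew-symmetric endomorphism. -/
/-! With `t = ‖u‖²` and `g = 1/√(1+t)`, `c = (g - 1)/t` (the two coefficients of `skewPerp`),
`R_u x = x - ⟪e,x⟫ e + g (⟪e,x⟫ (e+u) - ⟪u,x⟫ e) + c ⟪u,x⟫ u`.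
Moving `u` in a direction `v ⊥ u` leaves `‖u‖` stationary, so only the explicit occurrences of `u`
are differentiated, giving `g (⟪e,x⟫ v - ⟪v,x⟫ e) + c (⟪u,x⟫ v + ⟪v,x⟫ u)`. Applying `R_u` to
`skewPerp e u v x` gives the same vector because `g² + c (g + 1) = 0`: writing `‖u‖ = tan θ`,
`g = cos θ` and this is `cos² θ - sin² θ / tan² θ = 0`. -/

open RealInnerProductSpace

noncomputable section

variable {E : Type*} [NormedAddCommGroup E] [InnerProductSpace ℝ E]

/-- The rotation `R_u` sending the unit vector `e` to a positive multiple of `e + u` and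
fixing `span{e,u}ᗮ` pointwise, given by its explicit formula, applied to `x`. -/
def Rfun (e u x : E) : E :=
  x - ⟪e, x⟫ • e - (⟪u, x⟫ / ‖u‖ ^ 2) • u
    + (⟪e, x⟫ / Real.sqrt (1 + ‖u‖ ^ 2)) • (e + u)
    + (⟪u, x⟫ / (‖u‖ ^ 2 * Real.sqrt (1 + ‖u‖ ^ 2))) • (u - ‖u‖ ^ 2 • e)

/-- The skew-symmetric endomorphism
`(1/√(1+‖u‖²))(v eᵀ - e vᵀ) + ((1-√(1+‖u‖²))/(‖u‖²√(1+‖u‖²)))(v uᵀ - u vᵀ)` applied to `x`. -/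
def skewPerp (e u v x : E) : E :=
  (1 / Real.sqrt (1 + ‖u‖ ^ 2)) • (⟪e, x⟫ • v - ⟪v, x⟫ • e)
    + ((1 - Real.sqrt (1 + ‖u‖ ^ 2)) / (‖u‖ ^ 2 * Real.sqrt (1 + ‖u‖ ^ 2))) •
        (⟪u, x⟫ • v - ⟪v, x⟫ • u)

theorem fderiv_smul_apply_of_fderiv_apply_eq_zero {𝕜 V W : Type*} [NontriviallyNormedField 𝕜]
    [NormedAddCommGroup V] [NormedSpace 𝕜 V] [NormedAddCommGroup W] [NormedSpace 𝕜 W]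
    {c : V → 𝕜} {f : V → W} {u v : V} (hc : DifferentiableAt 𝕜 c u)
    (hf : DifferentiableAt 𝕜 f u) (hcv : fderiv 𝕜 c u v = 0) :
    fderiv 𝕜 (fun w => c w • f w) u v = c u • fderiv 𝕜 f u v := by
  simp [fderiv_fun_smul hc hf, hcv]

theorem fderiv_comp_norm_sq_apply_of_inner_eq_zero {h : ℝ → ℝ} {u v : E}
    (hh : DifferentiableAt ℝ h (‖u‖ ^ 2)) (huv : ⟪u, v⟫ = 0) :
    fderiv ℝ (fun w => h (‖w‖ ^ 2)) u v = 0 := by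
  have hd : HasFDerivAt (fun w : E => h (‖w‖ ^ 2)) _ u :=
    hh.hasDerivAt.comp_hasFDerivAt u (hasStrictFDerivAt_norm_sq u).hasFDerivAt
  rw [hd.fderiv]
  simp [huv]

def rotCos (t : ℝ) : ℝ := 1 / Real.sqrt (1 + t)

def rotCorr (t : ℝ) : ℝ := (1 - Real.sqrt (1 + t)) / (t * Real.sqrt (1 + t))

theorem differentiableAt_rotCos {t : ℝ} (ht : 0 < 1 + t) : DifferentiableAt ℝ rotCos t := by
  unfold rotCos
  fun_prop (disch := positivity)

theorem differentiableAt_rotCorr {t : ℝ} (ht : 0 < t) : DifferentiableAt ℝ rotCorr t := by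
  unfold rotCorr
  fun_prop (disch := positivity)

theorem rotCorr_mul_self {t : ℝ} (ht : 0 < t) : rotCorr t * t = rotCos t - 1 := by
  have hs : 0 < Real.sqrt (1 + t) := Real.sqrt_pos.2 (by linarith)
  unfold rotCorr rotCos
  field_simp

theorem rotCos_sq_add_rotCorr_mul {t : ℝ} (ht : 0 < t) :
    rotCos t ^ 2 + rotCorr t * (rotCos t + 1) = 0 := by
  have hs : 0 < Real.sqrt (1 + t) := Real.sqrt_pos.2 (by linarith)
  have hs2 : Real.sqrt (1 + t) ^ 2 = 1 + t := Real.sq_sqrt (by linarith)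
  unfold rotCorr rotCos
  field_simp
  linear_combination -hs2

theorem Rfun_eq_rotCos_rotCorr (e u x : E) :
    Rfun e u x = x - ⟪e, x⟫ • e + (rotCos (‖u‖ ^ 2) • (⟪e, x⟫ • (e + u) - ⟪u, x⟫ • e)
      + rotCorr (‖u‖ ^ 2) • (⟪u, x⟫ • u)) := by
  rcases eq_or_ne u 0 with rfl | hu
  · simp [Rfun, rotCos]
  have hn : ‖u‖ ^ 2 ≠ 0 := by positivity
  have hs : 0 < Real.sqrt (1 + ‖u‖ ^ 2) := Real.sqrt_pos.2 (by positivity)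
  unfold Rfun rotCos rotCorr
  match_scalars <;> field_simp <;> ring

theorem fderiv_Rfun_apply_of_inner_eq_zero {e u v : E} (hu : u ≠ 0) (huv : ⟪u, v⟫ = 0) (x : E) :
    fderiv ℝ (fun w => Rfun e w x) u v = rotCos (‖u‖ ^ 2) • (⟪e, x⟫ • v - ⟪v, x⟫ • e)
      + rotCorr (‖u‖ ^ 2) • (⟪u, x⟫ • v + ⟪v, x⟫ • u) := by
  have hcos : DifferentiableAt ℝ rotCos (‖u‖ ^ 2) := differentiableAt_rotCos (by positivity)
  have hcorr : DifferentiableAt ℝ rotCorr (‖u‖ ^ 2) := differentiableAt_rotCorr (by positivity)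
  have hG : DifferentiableAt ℝ (fun w : E => rotCos (‖w‖ ^ 2)) u :=
    hcos.comp (f := fun w : E => ‖w‖ ^ 2) u (differentiableAt_id.norm_sq ℝ)
  have hC : DifferentiableAt ℝ (fun w : E => rotCorr (‖w‖ ^ 2)) u :=
    hcorr.comp (f := fun w : E => ‖w‖ ^ 2) u (differentiableAt_id.norm_sq ℝ)
  have hI : DifferentiableAt ℝ (fun w : E => ⟪w, x⟫) u :=
    differentiableAt_id.inner ℝ (differentiableAt_const x)
  simp_rw [Rfun_eq_rotCos_rotCorr e _ x]
  rw [fderiv_const_add, fderiv_fun_add (by fun_prop) (by fun_prop), add_apply,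
    fderiv_smul_apply_of_fderiv_apply_eq_zero hG (by fun_prop)
      (fderiv_comp_norm_sq_apply_of_inner_eq_zero hcos huv),
    fderiv_smul_apply_of_fderiv_apply_eq_zero hC (by fun_prop)
      (fderiv_comp_norm_sq_apply_of_inner_eq_zero hcorr huv)]
  have hI' : fderiv ℝ (fun w : E => ⟪w, x⟫) u v = ⟪v, x⟫ := by
    rw [fderiv_inner_apply ℝ differentiableAt_fun_id (differentiableAt_const x)]
    simp
  have hP : fderiv ℝ (fun w => ⟪e, x⟫ • (e + w) - ⟪w, x⟫ • e) u v = ⟪e, x⟫ • v - ⟪v, x⟫ • e := by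
    rw [fderiv_fun_sub (by fun_prop) (by fun_prop), fderiv_fun_const_smul (by fun_prop),
      fderiv_const_add, fderiv_smul_const hI]
    simp [hI']
  have hQ : fderiv ℝ (fun w => ⟪w, x⟫ • w) u v = ⟪u, x⟫ • v + ⟪v, x⟫ • u := by
    simp [fderiv_fun_smul hI differentiableAt_fun_id, hI']
  rw [hP, hQ]

theorem skewPerp_eq (e u v x : E) :
    skewPerp e u v x = rotCos (‖u‖ ^ 2) • (⟪e, x⟫ • v - ⟪v, x⟫ • e)
      + rotCorr (‖u‖ ^ 2) • (⟪u, x⟫ • v - ⟪v, x⟫ • u) := rfl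

theorem Rfun_skewPerp {e u v : E} (he : ‖e‖ = 1) (hu : u ≠ 0) (heu : ⟪e, u⟫ = 0)
    (hev : ⟪e, v⟫ = 0) (huv : ⟪u, v⟫ = 0) (x : E) :
    Rfun e u (skewPerp e u v x) = rotCos (‖u‖ ^ 2) • (⟪e, x⟫ • v - ⟪v, x⟫ • e)
      + rotCorr (‖u‖ ^ 2) • (⟪u, x⟫ • v + ⟪v, x⟫ • u) := by
  have hn : 0 < ‖u‖ ^ 2 := by positivity
  have hue : ⟪u, e⟫ = 0 := by rw [real_inner_comm, heu]
  have hey : ⟪e, skewPerp e u v x⟫ = -(rotCos (‖u‖ ^ 2) * ⟪v, x⟫) := by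
    simp [skewPerp_eq, inner_add_right, inner_sub_right, real_inner_smul_right, he, heu, hev]
  have huy : ⟪u, skewPerp e u v x⟫ = -(rotCorr (‖u‖ ^ 2) * ‖u‖ ^ 2 * ⟪v, x⟫) := by
    simp only [skewPerp_eq, inner_add_right, inner_sub_right, real_inner_smul_right,
      real_inner_self_eq_norm_sq, hue, huv]
    ring
  rw [Rfun_eq_rotCos_rotCorr, hey, huy, skewPerp_eq]
  match_scalars
  · ring
  · linear_combination (rotCos (‖u‖ ^ 2) * ⟪v, x⟫) * rotCorr_mul_self hn
  · linear_combination (-⟪v, x⟫) * rotCos_sq_add_rotCorr_mul hn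
      - (rotCorr (‖u‖ ^ 2) * ⟪v, x⟫) * rotCorr_mul_self hn

theorem inner_skewPerp_left (e u v x y : E) :
    ⟪skewPerp e u v x, y⟫ = -⟪x, skewPerp e u v y⟫ := by
  simp only [skewPerp, inner_add_right, inner_sub_right, real_inner_smul_right,
    real_inner_comm x, real_inner_comm y]
  ring

theorem deriv_rotation_perp_general
    (e u v : E) (he : ‖e‖ = 1) (hu : u ≠ 0) (heu : ⟪e, u⟫ = 0)
    (hev : ⟪e, v⟫ = 0) (huv : ⟪u, v⟫ = 0) :
    (∀ x : E, fderiv ℝ (fun u' => Rfun e u' x) u v = Rfun e u (skewPerp e u v x)) ∧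
    (∀ x y : E, ⟪skewPerp e u v x, y⟫ = -⟪x, skewPerp e u v y⟫) :=
  ⟨fun x => by rw [fderiv_Rfun_apply_of_inner_eq_zero hu huv, Rfun_skewPerp he hu heu hev huv],
    inner_skewPerp_left e u v⟩

/-- For `v` orthogonal to both `e` and `u`, the directional derivative of `u ↦ R_u` in
direction `v` satisfies `R_u⁻¹ (∂R_u/∂v) = skewPerp`, i.e. `∂R_u/∂v = R_u ∘ skewPerp`;
in particular the endomorphism `skewPerp e u v` is skew-symmetric. -/
theorem deriv_rotation_perp [FiniteDimensional ℝ E]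
    (e u v : E) (he : ‖e‖ = 1) (hu : u ≠ 0) (heu : ⟪e, u⟫ = 0)
    (hev : ⟪e, v⟫ = 0) (huv : ⟪u, v⟫ = 0) :
    (∀ x : E, fderiv ℝ (fun u' => Rfun e u' x) u v = Rfun e u (skewPerp e u v x)) ∧
    (∀ x y : E, ⟪skewPerp e u v x, y⟫ = -⟪x, skewPerp e u v y⟫) :=
  deriv_rotation_perp_general e u v he hu heu hev huv
end
end

section
/- Let R_u be the rotation sending unit vector e to a positive multiple of e+u and fixing span{e,u}^⊥. For v parallel to u (v ∈ ℝu), the directional derivative satisfies R_u^{-1}(∂R_u/∂v) = (1/(1+‖u‖²))(v eᵀ - e vᵀ). -/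
/-! With `n = ‖u‖⁻¹ • u`, `R_u` is the rotation by the angle `arctan ‖u‖` in the plane spanned by
the orthonormal pair `e, n`, and the identity on its orthogonal complement. Moving `u` along `ℝu`
fixes that plane and only changes the angle, at rate `‖u‖ / (1 + ‖u‖²)` at `u`; and the derivative
in the angle of a plane rotation is the rotation composed with its generator
`x ↦ ⟪e, x⟫ n - ⟪n, x⟫ e`. -/

open RealInnerProductSpace

noncomputable section

variable {E : Type*} [NormedAddCommGroup E] [InnerProductSpace ℝ E]

open Real

def planeRotation (e n : E) (θ : ℝ) (x : E) : E :=
  x - ⟪e, x⟫ • e - ⟪n, x⟫ • n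
    + ⟪e, x⟫ • (cos θ • e + sin θ • n) + ⟪n, x⟫ • (cos θ • n - sin θ • e)

lemma planeRotation_smul (e n : E) (θ c : ℝ) (x : E) :
    planeRotation e n θ (c • x) = c • planeRotation e n θ x := by
  simp only [planeRotation, inner_smul_right]
  module

lemma Rfun_eq_planeRotation (e x : E) {u : E} (hu : u ≠ 0) :
    Rfun e u x = planeRotation e (‖u‖⁻¹ • u) (arctan ‖u‖) x := by
  simp only [Rfun, planeRotation, cos_arctan, sin_arctan, real_inner_smul_left]
  match_scalars <;> field_simp

lemma hasDerivAt_planeRotation {e n : E} (he : ‖e‖ = 1) (hn : ‖n‖ = 1) (hen : ⟪e, n⟫ = 0)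
    (x : E) (θ : ℝ) :
    HasDerivAt (fun θ => planeRotation e n θ x)
      (planeRotation e n θ (⟪e, x⟫ • n - ⟪n, x⟫ • e)) θ := by
  have hee : ⟪e, e⟫ = 1 := by simp [he]
  have hnn : ⟪n, n⟫ = 1 := by simp [hn]
  have hne : ⟪n, e⟫ = 0 := by rw [real_inner_comm, hen]
  have hrot : HasDerivAt (fun θ => cos θ • e + sin θ • n) (-sin θ • e + cos θ • n) θ :=
    ((hasDerivAt_cos θ).smul_const e).add ((hasDerivAt_sin θ).smul_const n)
  have hrot' : HasDerivAt (fun θ => cos θ • n - sin θ • e) (-sin θ • n - cos θ • e) θ :=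
    ((hasDerivAt_cos θ).smul_const n).sub ((hasDerivAt_sin θ).smul_const e)
  refine (((hrot.const_smul ⟪e, x⟫).const_add (x - ⟪e, x⟫ • e - ⟪n, x⟫ • n)).add
    (hrot'.const_smul ⟪n, x⟫)).congr_deriv ?_
  simp only [planeRotation, inner_sub_right, inner_smul_right, hee, hnn, hen, hne]
  module

lemma differentiableAt_Rfun (e x : E) {u : E} (hu : u ≠ 0) :
    DifferentiableAt ℝ (fun u' => Rfun e u' x) u := by
  have hinner : DifferentiableAt ℝ (fun u' : E => ⟪u', x⟫) u :=
    differentiableAt_id.inner ℝ (differentiableAt_const x)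
  have hnorm : DifferentiableAt ℝ (fun u' : E => ‖u'‖ ^ 2) u := differentiableAt_id.norm_sq ℝ
  unfold Rfun
  fun_prop (disch := positivity)

lemma Rfun_smul_eq_planeRotation (e x : E) {u : E} (hu : u ≠ 0) {c : ℝ} (hc : 0 < c) :
    Rfun e (c • u) x = planeRotation e (‖u‖⁻¹ • u) (arctan (c * ‖u‖)) x := by
  rw [Rfun_eq_planeRotation e x (smul_ne_zero hc.ne' hu), norm_smul, norm_of_nonneg hc.le,
    mul_inv, smul_smul]
  congr 2
  field_simp

lemma hasDerivAt_Rfun_smul {e u : E} (he : ‖e‖ = 1) (hu : u ≠ 0) (heu : ⟪e, u⟫ = 0) (x : E) :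
    HasDerivAt (fun c : ℝ => Rfun e (c • u) x)
      ((‖u‖ / (1 + ‖u‖ ^ 2)) • planeRotation e (‖u‖⁻¹ • u) (arctan ‖u‖)
        (⟪e, x⟫ • (‖u‖⁻¹ • u) - ⟪‖u‖⁻¹ • u, x⟫ • e)) 1 := by
  have hen : ⟪e, ‖u‖⁻¹ • u⟫ = 0 := by rw [inner_smul_right, heu, mul_zero]
  have hangle : HasDerivAt (fun c : ℝ => arctan (c * ‖u‖)) (‖u‖ / (1 + ‖u‖ ^ 2)) 1 := by
    simpa [div_eq_inv_mul] using ((hasDerivAt_id (1 : ℝ)).mul_const ‖u‖).arctan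
  have hrot := (hasDerivAt_planeRotation he (norm_smul_inv_norm (𝕜 := ℝ) hu) hen x
    (arctan ‖u‖)).scomp_of_eq 1 hangle (by simp)
  refine hrot.congr_of_eventuallyEq ?_
  filter_upwards [lt_mem_nhds one_pos] with c hc
  exact Rfun_smul_eq_planeRotation e x hu hc

theorem deriv_rotation_parallel_general
    (e u v : E) (he : ‖e‖ = 1) (hu : u ≠ 0) (heu : ⟪e, u⟫ = 0)
    (hv : ∃ s : ℝ, v = s • u) :
    ∀ x : E, fderiv ℝ (fun u' => Rfun e u' x) u v =
      Rfun e u ((1 / (1 + ‖u‖ ^ 2)) • (⟪e, x⟫ • v - ⟪v, x⟫ • e)) := by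
  obtain ⟨s, rfl⟩ := hv
  intro x
  have hray : HasDerivAt (fun c : ℝ => c • u) u 1 := by
    simpa using (hasDerivAt_id (1 : ℝ)).smul_const u
  have hD := ((differentiableAt_Rfun e x hu).hasFDerivAt.comp_hasDerivAt_of_eq 1 hray
    (one_smul ℝ u).symm).unique (hasDerivAt_Rfun_smul he hu heu x)
  rw [map_smul, hD, Rfun_eq_planeRotation e _ hu, smul_smul, ← planeRotation_smul]
  congr 1
  simp only [inner_smul_left, RCLike.conj_to_real]
  match_scalars <;> field_simp

/-- For `v` parallel to `u`, the directional derivative of `u ↦ R_u` in direction `v`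
satisfies `R_u⁻¹ (∂R_u/∂v) = (1/(1+‖u‖²))(v eᵀ - e vᵀ)`, i.e.
`∂R_u/∂v = R_u ∘ ((1/(1+‖u‖²))(v eᵀ - e vᵀ))`. -/
theorem deriv_rotation_parallel [FiniteDimensional ℝ E]
    (e u v : E) (he : ‖e‖ = 1) (hu : u ≠ 0) (heu : ⟪e, u⟫ = 0)
    (hv : ∃ s : ℝ, v = s • u) :
    ∀ x : E, fderiv ℝ (fun u' => Rfun e u' x) u v =
      Rfun e u ((1 / (1 + ‖u‖ ^ 2)) • (⟪e, x⟫ • v - ⟪v, x⟫ • e)) :=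
  deriv_rotation_parallel_general e u v he hu heu hv
end
end

section
/- The set Crit = {(v, ([u1],...,[up])) ∈ V × (ℙV1 × ... × ℙVp) : for each i, the contraction ⟨v | u1 ⊗ ... ⊗ ûi ⊗ ... ⊗ up⟩ is proportional to ui} is a smooth vector sub-bundle of the trivial bundle over ℙV1 × ... × ℙVp of rank N - (n1 + ... + np) + p, where N = n1⋯np; its fiber over ([u1],...,[up]) with each ui of norm 1 is the orthogonal complement of ⊕_{i=1}^p u1 ⊗ ... ⊗ (ui)^⊥ ⊗ ... ⊗ up. -/
/-!
The contraction `⟨v | u₁ ⊗ ⋯ ûᵢ ⋯ ⊗ u_p⟩` is the adjoint of `y ↦ u₁ ⊗ ⋯ ⊗ y ⊗ ⋯ ⊗ u_p`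
applied to `v`. Hence it is proportional to `uᵢ`, i.e. lies in `ℝ uᵢ = (uᵢ)ᗮᗮ`, exactly when `v`
is orthogonal to `u₁ ⊗ ⋯ ⊗ (uᵢ)ᗮ ⊗ ⋯ ⊗ u_p`. Because `⟪⊗ xᵢ, ⊗ x'ᵢ⟫ = ∏ ⟪xᵢ, x'ᵢ⟫`, these
`p` subspaces are pairwise orthogonal and the `i`-th is an injective image of `(uᵢ)ᗮ`, so their
sum has dimension `∑ (nᵢ - 1)`.
-/

open BigOperators RealInnerProductSpace Finset

noncomputable section

theorem EuclideanSpace.mem_span_singleton_iff_mul_eq_mul {ι : Type*}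
    {u c : EuclideanSpace ℝ ι} (hu : u ≠ 0) :
    c ∈ ℝ ∙ u ↔ ∀ a b, c a * u b = c b * u a := by
  rw [Submodule.mem_span_singleton]
  constructor
  · rintro ⟨r, rfl⟩ a b
    simp only [PiLp.smul_apply, smul_eq_mul]
    ring
  · intro h
    obtain ⟨b, hb⟩ : ∃ b, u b ≠ 0 := by
      by_contra! h0
      exact hu (PiLp.ext h0)
    refine ⟨c b / u b, PiLp.ext fun a => ?_⟩
    simp only [PiLp.smul_apply, smul_eq_mul]
    rw [div_mul_eq_mul_div, ← h, mul_div_cancel_right₀ _ hb]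

theorem Submodule.mem_orthogonal_map_iff {E F : Type*} [NormedAddCommGroup E]
    [InnerProductSpace ℝ E] [NormedAddCommGroup F] [InnerProductSpace ℝ F]
    {T : E →ₗ[ℝ] F} {S : F → E} (hS : ∀ v y, ⟪S v, y⟫ = ⟪v, T y⟫) (K : Submodule ℝ E) (v : F) :
    v ∈ (K.map T)ᗮ ↔ S v ∈ Kᗮ := by
  simp only [Submodule.mem_orthogonal, Submodule.mem_map, forall_exists_index, and_imp,
    forall_apply_eq_imp_iff₂]
  exact forall₂_congr fun y _ => by rw [real_inner_comm, ← hS, real_inner_comm]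

theorem iSupIndep.finrank_iSup {K V ι : Type*} [DivisionRing K] [AddCommGroup V] [Module K V]
    [FiniteDimensional K V] [Fintype ι] {p : ι → Submodule K V} (hp : iSupIndep p) :
    Module.finrank K ↥(⨆ i, p i) = ∑ i, Module.finrank K (p i) := by
  classical
  rw [Submodule.iSup_eq_range_dfinsupp_lsum,
    LinearMap.finrank_range_of_inj hp.dfinsupp_lsum_injective]
  exact Module.finrank_directSum K _

section RankOne

variable {p : ℕ} {n : Fin p → ℕ}

theorem rk1_update_apply [DecidableEq (Fin p)] (x : ∀ i, EuclideanSpace ℝ (Fin (n i))) (i : Fin p)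
    (y : EuclideanSpace ℝ (Fin (n i))) (α : ∀ j, Fin (n j)) :
    rk1 n (Function.update x i y) α = y (α i) * ∏ j ∈ univ.erase i, x j (α j) := by
  rw [rk1, PiLp.toLp_apply, ← mul_prod_erase univ _ (mem_univ i), Function.update_self]
  congr 1
  exact prod_congr rfl fun j hj => by rw [Function.update_of_ne (ne_of_mem_erase hj)]

variable (n) in
@[simps]
def rk1Multilinear :
    MultilinearMap ℝ (fun i => EuclideanSpace ℝ (Fin (n i))) (EuclideanSpace ℝ (∀ i, Fin (n i))) where
  toFun := rk1 n
  map_update_add' x i y z := PiLp.ext fun α => by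
    simp only [PiLp.add_apply, rk1_update_apply]
    ring
  map_update_smul' x i r y := PiLp.ext fun α => by
    simp only [PiLp.smul_apply, smul_eq_mul, rk1_update_apply]
    ring

theorem inner_rk1 (x x' : ∀ i, EuclideanSpace ℝ (Fin (n i))) :
    ⟪rk1 n x, rk1 n x'⟫ = ∏ i, ⟪x i, x' i⟫ := by
  simp only [PiLp.inner_apply, rk1, RCLike.inner_apply, conj_trivial,
    ← prod_mul_distrib, prod_univ_sum]
  rfl

theorem norm_rk1 (x : ∀ i, EuclideanSpace ℝ (Fin (n i))) : ‖rk1 n x‖ = ∏ i, ‖x i‖ := by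
  rw [← sq_eq_sq₀ (norm_nonneg _) (prod_nonneg fun i _ => norm_nonneg _), ← prod_pow]
  simp only [← real_inner_self_eq_norm_sq, inner_rk1]

theorem inner_contr (v : EuclideanSpace ℝ (∀ i, Fin (n i)))
    (x : ∀ i, EuclideanSpace ℝ (Fin (n i))) (i : Fin p) (y : EuclideanSpace ℝ (Fin (n i))) :
    ⟪contr n v x i, y⟫ = ⟪v, rk1 n (Function.update x i y)⟫ := by
  simp only [PiLp.inner_apply, RCLike.inner_apply, conj_trivial, contr, rk1_update_apply,
    mul_sum, mul_ite, mul_zero]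
  rw [sum_comm]
  refine sum_congr rfl fun α _ => ?_
  rw [sum_ite_eq, if_pos (mem_univ _)]
  ring

end RankOne

section SlotSubspace

variable {p : ℕ} (n : Fin p → ℕ) (x : ∀ i, EuclideanSpace ℝ (Fin (n i)))

/-- `x₁ ⊗ ⋯ ⊗ (xᵢ)ᗮ ⊗ ⋯ ⊗ x_p`. -/
def slotSubspace (i : Fin p) : Submodule ℝ (EuclideanSpace ℝ (∀ i, Fin (n i))) :=
  (ℝ ∙ x i)ᗮ.map ((rk1Multilinear n).toLinearMap x i)

theorem span_rk1_update_orthogonal_eq_slotSubspace (i : Fin p) :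
    Submodule.span ℝ {w | ∃ y : EuclideanSpace ℝ (Fin (n i)), ⟪x i, y⟫ = 0 ∧
      w = rk1 n (Function.update x i y)} = slotSubspace n x i := by
  rw [slotSubspace, ← Submodule.span_eq (ℝ ∙ x i)ᗮ, ← Submodule.span_image]
  congr 1
  ext w
  simp [Submodule.mem_orthogonal_singleton_iff_inner_right, eq_comm]

theorem mem_orthogonal_slotSubspace_iff (v : EuclideanSpace ℝ (∀ i, Fin (n i))) (i : Fin p) :
    v ∈ (slotSubspace n x i)ᗮ ↔ contr n v x i ∈ ℝ ∙ x i := by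
  rw [slotSubspace, Submodule.mem_orthogonal_map_iff (fun v y => inner_contr v x i y),
    Submodule.orthogonal_orthogonal]

theorem slotSubspace_isOrtho {i j : Fin p} (hij : i ≠ j) :
    slotSubspace n x i ⟂ slotSubspace n x j := by
  rw [Submodule.isOrtho_iff_inner_eq]
  rintro _ ⟨y, hy, rfl⟩ _ ⟨z, -, rfl⟩
  rw [MultilinearMap.toLinearMap_apply, MultilinearMap.toLinearMap_apply]
  refine (inner_rk1 _ _).trans (prod_eq_zero (mem_univ i) ?_)
  rw [Function.update_self, Function.update_of_ne hij]
  exact inner_eq_zero_symm.1 (Submodule.mem_orthogonal_singleton_iff_inner_right.1 hy)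

theorem iSupIndep_slotSubspace : iSupIndep (slotSubspace n x) :=
  (orthogonalFamily_iff_pairwise.2 fun _ _ hij => slotSubspace_isOrtho n x hij).independent

variable {n x}

theorem rk1_update_eq_zero_iff {i : Fin p} (hx : ∀ k ≠ i, x k ≠ 0)
    {y : EuclideanSpace ℝ (Fin (n i))} : rk1 n (Function.update x i y) = 0 ↔ y = 0 := by
  rw [← norm_eq_zero, norm_rk1, prod_eq_zero_iff]
  constructor
  · rintro ⟨k, -, hk⟩
    by_cases hki : k = i
    · subst hki
      simpa using hk
    · rw [Function.update_of_ne hki, norm_eq_zero] at hk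
      exact absurd hk (hx k hki)
  · rintro rfl
    exact ⟨i, mem_univ i, by simp⟩

theorem finrank_slotSubspace_add_one (hx : ∀ k, x k ≠ 0) (i : Fin p) :
    Module.finrank ℝ (slotSubspace n x i) + 1 = n i := by
  have hinj : Function.Injective ((rk1Multilinear n).toLinearMap x i) := by
    refine (injective_iff_map_eq_zero _).2 fun y hy => ?_
    rwa [MultilinearMap.toLinearMap_apply, rk1Multilinear_apply,
      rk1_update_eq_zero_iff fun k _ => hx k] at hy
  have hK := Submodule.finrank_add_finrank_orthogonal (ℝ ∙ x i)
  rw [finrank_span_singleton (hx i), finrank_euclideanSpace_fin] at hK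
  rw [slotSubspace, ← (Submodule.equivMapOfInjective _ hinj _).finrank_eq]
  omega

theorem finrank_iSup_slotSubspace_add (hx : ∀ k, x k ≠ 0) :
    Module.finrank ℝ ↥(⨆ i, slotSubspace n x i) + p = ∑ i, n i := by
  rw [(iSupIndep_slotSubspace n x).finrank_iSup,
    ← sum_congr rfl fun i _ => finrank_slotSubspace_add_one hx i, sum_add_distrib]
  simp

end SlotSubspace

/-- The fiber of `Crit` over a point `([u₁], …, [u_p])` of `ℙV₁ × ⋯ × ℙV_p` (represented
by unit vectors `uᵢ`), i.e. the set of `v` such that each contraction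
`⟨v | u₁ ⊗ ⋯ ûᵢ ⋯ ⊗ u_p⟩` is proportional to `uᵢ` (all `2×2` minors vanish), equals the
orthogonal complement of `⊕ᵢ u₁ ⊗ ⋯ ⊗ (uᵢ)ᗮ ⊗ ⋯ ⊗ u_p`; in particular `Crit` is a
sub-bundle of corank `∑ᵢ (nᵢ - 1)`, i.e. of rank `N - ∑ᵢ nᵢ + p` where `N = ∏ᵢ nᵢ`. -/
theorem crit_fiber (p : ℕ) (n : Fin p → ℕ)
    (u : ∀ i, EuclideanSpace ℝ (Fin (n i))) (hu : ∀ i, ‖u i‖ = 1) :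
    {v : EuclideanSpace ℝ (∀ i, Fin (n i)) |
        ∀ (i : Fin p) (a b : Fin (n i)),
          contr n v u i a * u i b = contr n v u i b * u i a} =
      ↑((⨆ i : Fin p, Submodule.span ℝ
          {w : EuclideanSpace ℝ (∀ i, Fin (n i)) |
            ∃ y : EuclideanSpace ℝ (Fin (n i)), ⟪u i, y⟫ = 0 ∧
              w = rk1 n (Function.update u i y)})ᗮ) ∧
    Module.finrank ℝ
        ((⨆ i : Fin p, Submodule.span ℝ
          {w : EuclideanSpace ℝ (∀ i, Fin (n i)) |
            ∃ y : EuclideanSpace ℝ (Fin (n i)), ⟪u i, y⟫ = 0 ∧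
              w = rk1 n (Function.update u i y)})ᗮ) + ∑ i, n i =
      (∏ i, n i) + p := by
  have hu0 : ∀ i, u i ≠ 0 := fun i h => by simpa [h] using hu i
  rw [iSup_congr fun i => span_rk1_update_orthogonal_eq_slotSubspace n u i]
  refine ⟨?_, ?_⟩
  · ext v
    simp only [Set.mem_ofPred_eq, SetLike.mem_coe, ← Submodule.iInf_orthogonal,
      Submodule.mem_iInf, mem_orthogonal_slotSubspace_iff,
      EuclideanSpace.mem_span_singleton_iff_mul_eq_mul (hu0 _)]
  · have hW := Submodule.finrank_add_finrank_orthogonal (⨆ i, slotSubspace n u i)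
    rw [finrank_euclideanSpace, Fintype.card_pi] at hW
    simp only [Fintype.card_fin] at hW
    have hsum := finrank_iSup_slotSubspace_add hu0
    omega
end
end

section
/- For n = 2, the expected number of critical rank-one approximations to a Bombieri-Gaussian symmetric tensor equals √(3p-2); explicitly, (√π/(2^{1/2} Γ(1))) · E_{w0,w ~ N(0,1)} |√p w0 - √(2(p-1)) w| = √(3p-2), where w0, w are independent standard normal variables. -/
open MeasureTheory Real

lemma ioi_integral_aux : ∫ x in Set.Ioi (0:ℝ), x * Real.exp (-x^2/2) = 1 := by
  have hderiv : ∀ x ∈ Set.Ioi (0:ℝ),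
      HasDerivAt (fun t : ℝ => -Real.exp (-t^2/2)) (x * Real.exp (-x^2/2)) x := by
    intro x _
    have h : HasDerivAt (fun t : ℝ => -t^2/2) (-x) x := by
      have h0 := (hasDerivAt_pow 2 x).neg.div_const 2
      refine h0.congr_deriv ?_
      ring
    have := h.exp.neg
    refine this.congr_deriv ?_
    ring
  have hcont : ContinuousWithinAt (fun t : ℝ => -Real.exp (-t^2/2)) (Set.Ici 0) 0 := by
    have : Continuous fun t : ℝ => -Real.exp (-t^2/2) := by fun_prop
    exact this.continuousWithinAt
  have hint : IntegrableOn (fun x : ℝ => x * Real.exp (-x^2/2)) (Set.Ioi 0) := by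
    have h := (integrable_mul_exp_neg_mul_sq (b := (1/2:ℝ)) (by norm_num)).integrableOn
      (s := Set.Ioi 0)
    have heq : (fun x:ℝ => x * Real.exp (-x^2/2)) = fun x => x * Real.exp (-(1/2)*x^2) := by
      ext x
      rw [show -x^2/2 = -(1/2)*x^2 from by ring]
    rw [heq]
    exact h
  have htend : Filter.Tendsto (fun t : ℝ => -Real.exp (-t^2/2)) Filter.atTop (nhds 0) := by
    have h1 : Filter.Tendsto (fun t : ℝ => -t^2/2) Filter.atTop Filter.atBot := by
      apply Filter.Tendsto.atBot_div_const (by norm_num : (0:ℝ) < 2)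
      exact Filter.tendsto_neg_atTop_atBot.comp
        (Filter.tendsto_pow_atTop (by norm_num : (2:ℕ) ≠ 0))
    have h2 : Filter.Tendsto (fun t : ℝ => Real.exp (-t^2/2)) Filter.atTop (nhds 0) :=
      Real.tendsto_exp_atBot.comp h1
    simpa using h2.neg
  have := integral_Ioi_of_hasDerivAt_of_tendsto hcont hderiv hint htend
  simpa using this

lemma abs_integral_aux : ∫ x : ℝ, |x| * Real.exp (-x^2/2) = 2 := by
  have h1 : ∀ x : ℝ, |x| * Real.exp (-x^2/2) = (fun t => t * Real.exp (-t^2/2)) |x| := by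
    intro x; simp [sq_abs]
  simp_rw [h1]
  rw [integral_comp_abs (f := fun t => t * Real.exp (-t^2/2)), ioi_integral_aux]
  norm_num

lemma gauss_integral_aux : ∫ v : ℝ, Real.exp (-v^2/2) = Real.sqrt (2*π) := by
  rw [show (fun v:ℝ => Real.exp (-v^2/2)) = fun v => Real.exp (-(1/2)*v^2) from by
    ext v; rw [show -v^2/2 = -(1/2)*v^2 from by ring]]
  rw [integral_gaussian, show π/(1/2:ℝ) = 2*π from by ring]

/-- For `n = 2`, the expected number of critical rank-one approximations to a
Bombieri-Gaussian symmetric tensor in `S^p ℝ²` equals `√(3p-2)`: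
`(√π / (2^(1/2) Γ(1))) · E|√p·w₀ - √(2(p-1))·w| = √(3p-2)` for independent standard
normal `w₀, w`. -/
theorem expected_count_n_two (p : ℕ) (hp : 1 ≤ p) :
    (Real.sqrt π / (Real.sqrt 2 * Real.Gamma 1)) *
      (∫ x : ℝ × ℝ, |Real.sqrt p * x.1 - Real.sqrt (2 * ((p : ℝ) - 1)) * x.2| *
        ((1 / (2 * π)) * Real.exp (-(x.1 ^ 2 + x.2 ^ 2) / 2))) =
      Real.sqrt (3 * (p : ℝ) - 2) := by
  have hp1 : (1:ℝ) ≤ (p:ℝ) := by exact_mod_cast hp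
  set a := Real.sqrt p with ha
  set b := Real.sqrt (2*((p:ℝ)-1)) with hb
  set r := Real.sqrt (3*(p:ℝ)-2) with hr
  have ha2 : a^2 = p := Real.sq_sqrt (by positivity)
  have hb2 : b^2 = 2*((p:ℝ)-1) := Real.sq_sqrt (by linarith)
  have hr2 : r^2 = 3*(p:ℝ)-2 := Real.sq_sqrt (by linarith)
  have hrpos : 0 < r := Real.sqrt_pos.mpr (by linarith)
  have hr0 : r ≠ 0 := ne_of_gt hrpos
  have key : r^2 = a^2 + b^2 := by rw [ha2, hb2, hr2]; ring
  set L : (ℝ×ℝ) →ₗ[ℝ] (ℝ×ℝ) :=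
    Matrix.toLin (Module.Basis.finTwoProd ℝ) (Module.Basis.finTwoProd ℝ) !![a/r, -(b/r); b/r, a/r] with hL
  have hLapp : ∀ x : ℝ×ℝ, L x = ((a/r)*x.1 + (-(b/r))*x.2, (b/r)*x.1 + (a/r)*x.2) := by
    intro x; rw [hL, Matrix.toLin_finTwoProd_apply]
  have hdet : LinearMap.det L = 1 := by
    rw [hL, LinearMap.det_toLin, Matrix.det_fin_two_of]
    field_simp
    linarith [key]
  set F : ℝ×ℝ → ℝ := fun q => |a*q.1 - b*q.2| * ((1/(2*π)) * Real.exp (-(q.1^2+q.2^2)/2))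
    with hF
  set G : ℝ×ℝ → ℝ := fun q => (r * |q.1|) * ((1/(2*π)) * Real.exp (-(q.1^2+q.2^2)/2)) with hG
  have hFL : ∀ x : ℝ×ℝ, F x = G (L x) := by
    intro x
    have h1 : (L x).1 = (a*x.1 - b*x.2)/r := by rw [hLapp]; ring
    have h2 : (L x).1^2 + (L x).2^2 = x.1^2 + x.2^2 := by
      rw [hLapp]
      field_simp
      linear_combination (-(x.1^2+x.2^2)) * key
    have h3 : r * |(L x).1| = |a*x.1 - b*x.2| := by
      rw [h1, abs_div, abs_of_pos hrpos]
      field_simp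
    rw [hF, hG]
    simp only [h2, h3]
  have hmap : Measure.map L volume = volume := by
    rw [Measure.map_linearMap_addHaar_eq_smul_addHaar volume (by rw [hdet]; norm_num), hdet]
    simp
  have hG_cont : Continuous G := by
    rw [hG]; fun_prop
  have hchange : ∫ x : ℝ×ℝ, F x = ∫ q : ℝ×ℝ, G q := by
    simp_rw [hFL]
    calc ∫ x : ℝ×ℝ, G (L x) = ∫ q : ℝ×ℝ, G q ∂(Measure.map L volume) :=
          (integral_map (L.continuous_of_finiteDimensional).aemeasurable
            (by rw [hmap]; exact hG_cont.aestronglyMeasurable)).symm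
      _ = ∫ q : ℝ×ℝ, G q := by rw [hmap]
  have hGsplit : ∀ q : ℝ×ℝ, G q =
      (fun u => (r*(1/(2*π))) * (|u| * Real.exp (-u^2/2))) q.1 *
      (fun v => Real.exp (-v^2/2)) q.2 := by
    intro q
    rw [hG]
    simp only
    rw [show -(q.1^2+q.2^2)/2 = -q.1^2/2 + -q.2^2/2 from by ring, Real.exp_add]
    ring
  have hsplit : ∫ q : ℝ×ℝ, G q = (r*(1/(2*π))*2) * Real.sqrt (2*π) := by
    simp_rw [hGsplit]
    rw [show (volume : Measure (ℝ×ℝ)) = (volume : Measure ℝ).prod volume from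
      Measure.volume_eq_prod ℝ ℝ,
      integral_prod_mul (f := fun u : ℝ => r * (1/(2*π)) * (|u| * Real.exp (-u^2/2)))
        (g := fun v : ℝ => Real.exp (-v^2/2)),
      integral_const_mul (r * (1/(2*π))) (fun u : ℝ => |u| * Real.exp (-u^2/2)),
      abs_integral_aux, gauss_integral_aux]
  have hint : (∫ x : ℝ×ℝ, |a * x.1 - b * x.2| *
      ((1/(2*π)) * Real.exp (-(x.1^2+x.2^2)/2))) = (r*(1/(2*π))*2) * Real.sqrt (2*π) := by
    rw [show (∫ x : ℝ×ℝ, |a * x.1 - b * x.2| *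
      ((1/(2*π)) * Real.exp (-(x.1^2+x.2^2)/2))) = ∫ x : ℝ×ℝ, F x from rfl, hchange, hsplit]
  rw [hint, Real.Gamma_one, Real.sqrt_mul (by norm_num : (0:ℝ) ≤ 2)]
  have hsp : Real.sqrt π * Real.sqrt π = π := Real.mul_self_sqrt pi_nonneg
  have hs2 : Real.sqrt 2 ≠ 0 := by positivity
  have hpi : π ≠ 0 := ne_of_gt pi_pos
  field_simp
  linear_combination hsp
end
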